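/- Let x₁,…,xₙ and y₁,…,yₙ be points in ℝ^d and ε ∈ [0,1] with (1/n)·#{j : y_j ≠ x_j} ≤ ε. If ẑ ∈ ℝ^d satisfies D_n(ẑ; y₁,…,yₙ) = sup_{w ∈ ℝ^d} D_n(w; y₁,…,yₙ), then D_n(ẑ; x₁,…,xₙ) ≥ sup_{w ∈ ℝ^d} D_n(w; x₁,…,xₙ) − 2ε; that is, every maximizer of the contaminated empirical depth lies in the depth region R_n(2ε; x₁,…,xₙ) of the original sample. -/

import Mathlib

open MeasureTheory ProbabilityTheory Real Filter
open scoped ENNReal RealInnerProductSpace symmDiff Pointwise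

noncomputable section

/-- Euclidean space ℝ^d. -/
abbrev Euc (d : ℕ) := EuclideanSpace ℝ (Fin d)

/-- Apply a d×d matrix to a vector of ℝ^d. -/
noncomputable def mulVecE {d : ℕ} (M : Matrix (Fin d) (Fin d) ℝ) (v : Euc d) : Euc d :=
  (EuclideanSpace.equiv (Fin d) ℝ).symm (M.mulVec ((EuclideanSpace.equiv (Fin d) ℝ) v))

/-- Empirical (Tukey) halfspace depth of `z` with respect to the sample `x`:
the infimum over unit vectors `u` of the fraction of sample points in the
halfspace `{w : ⟪w, u⟫ ≥ ⟪z, u⟫}`. -/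
noncomputable def empDepth {d n : ℕ} (x : Fin n → Euc d) (z : Euc d) : ℝ :=
  ⨅ u : {u : Euc d // ‖u‖ = 1},
    ((Finset.univ.filter (fun j => ⟪z, (u : Euc d)⟫ ≤ ⟪x j, (u : Euc d)⟫)).card : ℝ) / n

/-- Maximal empirical depth `sup_z D_n(z; x)`. -/
noncomputable def maxDepth {d n : ℕ} (x : Fin n → Euc d) : ℝ :=
  ⨆ z : Euc d, empDepth x z

/-- Empirical depth region at level δ: `{z : D_n(z) ≥ sup_w D_n(w) − δ}`. -/
def depthRegion {d n : ℕ} (x : Fin n → Euc d) (δ : ℝ) : Set (Euc d) :=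
  {z | maxDepth x - δ ≤ empDepth x z}

/-- Standard Gaussian measure N(0, I_d) on ℝ^d. -/
noncomputable def stdGaussian (d : ℕ) : Measure (Euc d) :=
  (Measure.pi (fun _ : Fin d => gaussianReal 0 1)).map
    (EuclideanSpace.equiv (Fin d) ℝ).symm

/-- Gaussian measure N(μ, Σ) on ℝ^d, defined as the pushforward of the standard
Gaussian under `x ↦ μ + Σ^{1/2} x`. -/
noncomputable def gaussianE {d : ℕ} (μ : Euc d) (S : Matrix (Fin d) (Fin d) ℝ)
    (hS : S.PosSemidef) : Measure (Euc d) :=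
  (stdGaussian d).map (fun x => μ + mulVecE ((hS.1.eigenvectorUnitary : Matrix (Fin d) (Fin d) ℝ) *
      Matrix.diagonal (Real.sqrt ∘ hS.1.eigenvalues) *
      (star hS.1.eigenvectorUnitary : Matrix (Fin d) (Fin d) ℝ)) x)

/-- Operator (spectral) norm of a d×d matrix. -/
noncomputable def matOpNorm {d : ℕ} (S : Matrix (Fin d) (Fin d) ℝ) : ℝ :=
  ‖(Matrix.toEuclideanCLM (𝕜 := ℝ) S : Euc d →L[ℝ] Euc d)‖

/-- An estimator is affine equivariant if `T(Mx₁+b,…,Mxₙ+b) = M T(x₁,…,xₙ) + b`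
for every invertible matrix `M` and vector `b`. -/
def AffineEquivariant {d n : ℕ} (T : (Fin n → Euc d) → Euc d) : Prop :=
  ∀ (M : Matrix (Fin d) (Fin d) ℝ), IsUnit M → ∀ (b : Euc d) (x : Fin n → Euc d),
    T (fun j => mulVecE M (x j) + b) = mulVecE M (T x) + b

/-
Changing the sample at a fraction `c` of its points moves every halfspace count, hence the depth
of every point and the maximal depth, by at most `c`. So if `ẑ` is a deepest point of the
contaminated sample, `sup D(·; x) ≤ sup D(·; y) + c = D(ẑ; y) + c ≤ D(ẑ; x) + 2c`.
-/

open Finset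

lemma Finset.card_filter_le_card_filter_add_card_ne {ι β : Type*} [Fintype ι] [DecidableEq ι]
    [DecidableEq β] (p : β → Prop) [DecidablePred p] (x y : ι → β) :
    #{j | p (x j)} ≤ #{j | p (y j)} + #{j | y j ≠ x j} := by
  refine (card_le_card fun j hj => ?_).trans (card_union_le _ _)
  by_cases hxy : y j = x j <;> simp_all

lemma Real.iInf_le_iInf_add {ι : Type*} {f g : ι → ℝ} {c : ℝ} (hf : BddBelow (Set.range f))
    (hfg : ∀ i, f i ≤ g i + c) (hc : 0 ≤ c) : ⨅ i, f i ≤ (⨅ i, g i) + c := by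
  rcases isEmpty_or_nonempty ι with _ | _
  · simpa [Real.iInf_of_isEmpty] using hc
  · exact sub_le_iff_le_add.mp <| le_ciInf fun i => by linarith [ciInf_le hf i, hfg i]

section Depth

variable {d n : ℕ}

lemma bddBelow_range_halfspace_fraction (x : Fin n → Euc d) (z : Euc d) :
    BddBelow (Set.range fun u : {u : Euc d // ‖u‖ = 1} =>
      (#{j | ⟪z, (u : Euc d)⟫ ≤ ⟪x j, (u : Euc d)⟫} : ℝ) / n) :=
  ⟨0, by rintro _ ⟨u, rfl⟩; positivity⟩

lemma empDepth_le_one (x : Fin n → Euc d) (z : Euc d) : empDepth x z ≤ 1 := by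
  rcases isEmpty_or_nonempty {u : Euc d // ‖u‖ = 1} with hu | hu
  · simp [empDepth, Real.iInf_of_isEmpty]
  · obtain ⟨u⟩ := hu
    refine ciInf_le_of_le (bddBelow_range_halfspace_fraction x z) u
      (div_le_one_of_le₀ ?_ n.cast_nonneg)
    exact_mod_cast (card_filter_le _ _).trans_eq (card_fin n)

lemma bddAbove_range_empDepth (x : Fin n → Euc d) : BddAbove (Set.range (empDepth x)) :=
  ⟨1, by rintro _ ⟨z, rfl⟩; exact empDepth_le_one x z⟩

lemma empDepth_le_empDepth_add (x y : Fin n → Euc d) (z : Euc d) :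
    empDepth x z ≤ empDepth y z + (Nat.card {j | y j ≠ x j} : ℝ) / n := by
  classical
  rw [Nat.card_eq_fintype_card, Fintype.card_subtype]
  refine Real.iInf_le_iInf_add (bddBelow_range_halfspace_fraction x z) (fun u => ?_) (by positivity)
  rw [← add_div]
  gcongr
  exact_mod_cast card_filter_le_card_filter_add_card_ne
    (fun w => ⟪z, (u : Euc d)⟫ ≤ ⟪w, (u : Euc d)⟫) x y

lemma maxDepth_le_maxDepth_add (x y : Fin n → Euc d) :
    maxDepth x ≤ maxDepth y + (Nat.card {j | y j ≠ x j} : ℝ) / n :=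
  ciSup_le fun z => (empDepth_le_empDepth_add x y z).trans <|
    add_le_add_left (le_ciSup (bddAbove_range_empDepth y) z) _

end Depth

theorem stmt_3_general {d n : ℕ} (x y : Fin n → Euc d) (ε : ℝ)
    (hcont : (Nat.card {j : Fin n | y j ≠ x j} : ℝ) / n ≤ ε)
    (zhat : Euc d) (hzhat : empDepth y zhat = maxDepth y) :
    maxDepth x - 2 * ε ≤ empDepth x zhat ∧ zhat ∈ depthRegion x (2 * ε) := by
  have hmax := maxDepth_le_maxDepth_add x y
  have hzhat' := empDepth_le_empDepth_add y x zhat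
  simp_rw [ne_comm (a := x _)] at hzhat'
  have hdeep : maxDepth x - 2 * ε ≤ empDepth x zhat := by linarith
  exact ⟨hdeep, hdeep⟩

/-- every maximizer of the contaminated empirical depth lies in the
depth region `R_n(2ε)` of the original sample. -/
theorem stmt_3 {d n : ℕ} (x y : Fin n → Euc d) (ε : ℝ) (hε0 : 0 ≤ ε) (hε1 : ε ≤ 1)
    (hcont : (Nat.card {j : Fin n | y j ≠ x j} : ℝ) / n ≤ ε)
    (zhat : Euc d) (hzhat : empDepth y zhat = maxDepth y) :
    maxDepth x - 2 * ε ≤ empDepth x zhat ∧ zhat ∈ depthRegion x (2 * ε) :=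
  stmt_3_general x y ε hcont zhat hzhat
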